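/- Under ε-contamination with ε < 1/2, the RPD median does not break down in the directional sense: sup over contaminating Q ∈ Q(ε) and v ∈ V_β(Q,ε) of |⟨θ(P_{(Q,ε)}) − θ(P_X), v⟩| is finite. Consequently the directional breakdown point ε*(θ;P_X) of the RPD median satisfies ε*(θ;P_X) ≥ 1/2. -/

import Mathlib

/-!
The RPD median θ(P_{(Q,ε)}) is at least as deep as the origin, so its outlyingness in every
admissible direction is bounded by that of the origin. For ε < 1/2 choose q with
(1 - ε) P(‖X‖ ≤ q) > 1/2: whatever Q is, each unit projection of the mixture puts more than
half of its mass in [-q, q], so its median lies in [-q, q] and its MAD is at most 2q. The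
outlyingness of 0 is then at most q/β in every direction of V_β, hence so is that of the RPD
median, and |⟨θ(P_{(Q,ε)}), v⟩| ≤ q + 2q²/β uniformly in Q and v.
-/

open MeasureTheory Filter
open scoped RealInnerProductSpace ENNReal

noncomputable section

/-- The set of medians of a distribution on `ℝ`. -/
def medianSetM (m : Measure ℝ) : Set ℝ :=
  {a : ℝ | m (Set.Iic a) ≥ 1/2 ∧ m (Set.Ici a) ≥ 1/2}

/-- The median (midpoint-of-medians convention) of a distribution on `ℝ`. -/
def medM (m : Measure ℝ) : ℝ :=
  (sInf (medianSetM m) + sSup (medianSetM m)) / 2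

/-- The median absolute deviation of a distribution on `ℝ`. -/
def madM (m : Measure ℝ) : ℝ :=
  medM (m.map (fun z => |z - medM m|))

variable {H : Type*} [NormedAddCommGroup H] [InnerProductSpace ℝ H] [MeasurableSpace H]

/-- The median of the projection `⟨X, v⟩` for `X ∼ P`. -/
def medP (P : Measure H) (v : H) : ℝ := medM (P.map (fun x => ⟪x, v⟫))

/-- The MAD of the projection `⟨X, v⟩` for `X ∼ P`. -/
def madP (P : Measure H) (v : H) : ℝ := madM (P.map (fun x => ⟪x, v⟫))

/-- The regularized direction set `V_β(P)`. -/
def dirSetP (P : Measure H) (β : ℝ) : Set H := {v : H | ‖v‖ = 1 ∧ β ≤ madP P v}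

/-- The projection outlyingness `O_v(x; P)`. -/
def outlP (P : Measure H) (v x : H) : ℝ := |⟪x, v⟫ - medP P v| / madP P v

/-- The regularized projection depth `D_β(x; P)`. -/
def RPDP (P : Measure H) (β : ℝ) (x : H) : ℝ :=
  ⨅ v : dirSetP P β, (1 + outlP P v x)⁻¹

/-- The `ε`-contaminated mixture `(1-ε)P + εQ`. -/
def mix (P Q : Measure H) (ε : ℝ) : Measure H :=
  ENNReal.ofReal (1 - ε) • P + ENNReal.ofReal ε • Q


open Set Metric Topology ProbabilityTheory

section Median

lemma not_disjoint_of_half_le_of_half_lt {α : Type*} [MeasurableSpace α] {μ : Measure α}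
    [IsZeroOrProbabilityMeasure μ] {s t : Set α} (ht : MeasurableSet t)
    (hs : 1/2 ≤ μ s) (hlt : 1/2 < μ t) : ¬ Disjoint s t := by
  intro hst
  have : 1/2 + 1/2 < μ (s ∪ t) := by
    rw [measure_union hst ht]
    exact ENNReal.add_lt_add_of_le_of_lt (by simp) hs hlt
  rw [ENNReal.add_halves] at this
  exact this.not_ge prob_le_one

variable {m : Measure ℝ} [IsProbabilityMeasure m]

lemma medianSetM_subset_Icc {a b : ℝ} (ha : 1/2 < m (Ici a)) (hb : 1/2 < m (Iic b)) :
    medianSetM m ⊆ Icc a b := fun _ hc =>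
  ⟨not_lt.1 fun hca => not_disjoint_of_half_le_of_half_lt measurableSet_Ici hc.1 ha
      (Iic_disjoint_Ici.2 hca.not_ge),
    not_lt.1 fun hbc => not_disjoint_of_half_le_of_half_lt measurableSet_Iic hc.2 hb
      (Ici_disjoint_Iic.2 hbc.not_ge)⟩

-- The median exhibited is the smallest point where the cdf reaches 1/2.
lemma medianSetM_nonempty : (medianSetM m).Nonempty := by
  set F := cdf m
  set S := {x | 1/2 ≤ F x}
  have hS : S.Nonempty :=
    ((tendsto_cdf_atTop m).eventually_const_le (by norm_num : (1/2 : ℝ) < 1)).exists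
  have hSbdd : BddBelow S := by
    obtain ⟨x₀, hx₀⟩ :=
      ((tendsto_cdf_atBot m).eventually_lt_const (by norm_num : (0 : ℝ) < 1/2)).exists
    exact ⟨x₀, fun y hy => not_lt.1 fun hyx => (hy.trans (monotone_cdf m hyx.le)).not_gt hx₀⟩
  have hcdf : 1/2 ≤ F (sInf S) := by
    refine ge_of_tendsto ((F.right_continuous _).mono Ioi_subset_Ici_self).tendsto
      (eventually_nhdsWithin_of_forall fun x hx => ?_)
    obtain ⟨y, hyS, hyx⟩ := (csInf_lt_iff hSbdd hS).1 hx
    exact hyS.trans (monotone_cdf m hyx.le)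
  have hleft : Function.leftLim F (sInf S) ≤ 1/2 :=
    le_of_tendsto ((monotone_cdf m).tendsto_leftLim _) (eventually_nhdsWithin_of_forall
      fun x hx => le_of_lt <| not_le.1 fun hxS => (csInf_le hSbdd hxS).not_gt hx)
  have half : (1/2 : ℝ≥0∞) = ENNReal.ofReal (1/2) := by simp
  refine ⟨sInf S, ?_, ?_⟩
  · rw [← ofReal_cdf, half]
    exact ENNReal.ofReal_le_ofReal hcdf
  · rw [← measure_cdf m, F.measure_Ici (tendsto_cdf_atTop m), half]
    exact ENNReal.ofReal_le_ofReal (by linarith)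

lemma medM_mem_Icc {a b : ℝ} (ha : 1/2 < m (Ici a)) (hb : 1/2 < m (Iic b)) :
    medM m ∈ Icc a b := by
  obtain ⟨c, hc⟩ := medianSetM_nonempty (m := m)
  have hsub := medianSetM_subset_Icc ha hb
  have hinf : a ≤ sInf (medianSetM m) := le_csInf ⟨c, hc⟩ fun _ hx => (hsub hx).1
  have hsup : sSup (medianSetM m) ≤ b := csSup_le ⟨c, hc⟩ fun _ hx => (hsub hx).2
  have hle : sInf (medianSetM m) ≤ sSup (medianSetM m) :=
    csInf_le_csSup ⟨c, hc⟩ ⟨a, fun _ hx => (hsub hx).1⟩ ⟨b, fun _ hx => (hsub hx).2⟩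
  constructor <;> (unfold medM; linarith)

lemma medM_mem_Icc_of_half_lt {a b : ℝ} (h : 1/2 < m (Icc a b)) : medM m ∈ Icc a b :=
  medM_mem_Icc (h.trans_le (measure_mono Icc_subset_Ici_self))
    (h.trans_le (measure_mono Icc_subset_Iic_self))

lemma madM_le_of_half_lt {a b : ℝ} (h : 1/2 < m (Icc a b)) : madM m ≤ b - a := by
  have hmed := medM_mem_Icc_of_half_lt h
  have hmeas : Measurable fun z : ℝ => |z - medM m| := by fun_prop
  have : IsProbabilityMeasure (m.map fun z => |z - medM m|) :=
    Measure.isProbabilityMeasure_map hmeas.aemeasurable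
  refine (medM_mem_Icc_of_half_lt (a := 0) (h.trans_le ?_)).2
  rw [Measure.map_apply hmeas measurableSet_Icc]
  refine measure_mono fun z hz => ⟨abs_nonneg _, abs_le.2 ⟨?_, ?_⟩⟩ <;>
    linarith [hz.1, hz.2, hmed.1, hmed.2]

end Median

section Projection

variable [OpensMeasurableSpace H] {P : Measure H} {v : H} {q : ℝ}

lemma half_lt_map_inner_Icc (hv : ‖v‖ ≤ 1) (h : 1/2 < P (closedBall 0 q)) :
    1/2 < (P.map fun x => ⟪x, v⟫) (Icc (-q) q) := by
  rw [Measure.map_apply (by fun_prop) measurableSet_Icc]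
  refine h.trans_le (measure_mono fun x hx => abs_le.1 ?_)
  have hx : ‖x‖ ≤ q := mem_closedBall_zero_iff.1 hx
  calc |⟪x, v⟫| ≤ ‖x‖ * ‖v‖ := abs_real_inner_le_norm x v
    _ ≤ q * 1 := mul_le_mul hx hv (norm_nonneg _) ((norm_nonneg _).trans hx)
    _ = q := mul_one q

lemma abs_medP_le [IsProbabilityMeasure P] (hv : ‖v‖ ≤ 1) (h : 1/2 < P (closedBall 0 q)) :
    |medP P v| ≤ q := by
  have := Measure.isProbabilityMeasure_map (μ := P) (f := fun x => ⟪x, v⟫) (by fun_prop)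
  exact abs_le.2 (medM_mem_Icc_of_half_lt (half_lt_map_inner_Icc hv h))

lemma madP_le [IsProbabilityMeasure P] (hv : ‖v‖ ≤ 1) (h : 1/2 < P (closedBall 0 q)) :
    madP P v ≤ 2 * q := by
  have := Measure.isProbabilityMeasure_map (μ := P) (f := fun x => ⟪x, v⟫) (by fun_prop)
  have := madM_le_of_half_lt (half_lt_map_inner_Icc hv h)
  rw [madP]
  linarith

end Projection

lemma isProbabilityMeasure_mix {α : Type*} [MeasurableSpace α] (P Q : Measure α)
    [IsProbabilityMeasure P] [IsProbabilityMeasure Q] {ε : ℝ} (h0 : 0 ≤ ε) (h1 : ε ≤ 1) :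
    IsProbabilityMeasure (mix P Q ε) := by
  constructor
  simp only [mix, Measure.add_apply, Measure.smul_apply, smul_eq_mul, measure_univ, mul_one]
  rw [← ENNReal.ofReal_add (by linarith) h0]
  norm_num

lemma exists_forall_half_lt_mix_closedBall {α : Type*} [PseudoMetricSpace α] [MeasurableSpace α]
    (P : Measure α) [IsProbabilityMeasure P] (x : α) {ε : ℝ} (hε : ε < 1/2) :
    ∃ q : ℝ, ∀ Q : Measure α, 1/2 < mix P Q ε (closedBall x q) := by
  have hP : Tendsto (fun n : ℕ => ENNReal.ofReal (1 - ε) * P (closedBall x n)) atTop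
      (𝓝 (ENNReal.ofReal (1 - ε))) := by
    have := tendsto_measure_iUnion_atTop (μ := P)
      (monotone_nat_of_le_succ fun n =>
        closedBall_subset_closedBall (x := x) (Nat.cast_le.2 n.le_succ))
    rw [iUnion_closedBall_nat, measure_univ] at this
    simpa using ENNReal.Tendsto.const_mul this (Or.inr ENNReal.ofReal_ne_top)
  have hhalf : (1/2 : ℝ≥0∞) < ENNReal.ofReal (1 - ε) := by
    rw [ENNReal.lt_ofReal_iff_toReal_lt (by simp)]
    norm_num
    linarith
  obtain ⟨n, hn⟩ := (hP.eventually_const_lt hhalf).exists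
  refine ⟨n, fun Q => hn.trans_le ?_⟩
  simp only [mix, Measure.add_apply, Measure.smul_apply, smul_eq_mul]
  exact le_self_add

section Depth

variable {m : Measure H} {β c : ℝ} {v x y : H}

lemma outlP_nonneg (hv : 0 ≤ madP m v) : 0 ≤ outlP m v x :=
  div_nonneg (abs_nonneg _) hv

lemma RPDP_le (hβ : 0 < β) (hv : v ∈ dirSetP m β) : RPDP m β x ≤ (1 + outlP m v x)⁻¹ := by
  refine ciInf_le ⟨0, ?_⟩ (⟨v, hv⟩ : dirSetP m β)
  rintro _ ⟨w, rfl⟩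
  have := outlP_nonneg (x := x) (hβ.le.trans w.2.2)
  positivity

lemma inv_one_add_le_RPDP (hβ : 0 < β) (hne : (dirSetP m β).Nonempty)
    (h : ∀ v ∈ dirSetP m β, outlP m v x ≤ c) : (1 + c)⁻¹ ≤ RPDP m β x := by
  have := hne.to_subtype
  refine le_ciInf fun w => inv_anti₀ ?_ (by linarith [h w w.2])
  linarith [outlP_nonneg (x := x) (hβ.le.trans w.2.2)]

lemma outlP_le_of_RPDP_le (hβ : 0 < β) (hy : ∀ w ∈ dirSetP m β, outlP m w y ≤ c)
    (hxy : RPDP m β y ≤ RPDP m β x) (hv : v ∈ dirSetP m β) : outlP m v x ≤ c := by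
  have hx := outlP_nonneg (x := x) (hβ.le.trans hv.2)
  have hc : 0 ≤ c := (outlP_nonneg (hβ.le.trans hv.2)).trans (hy v hv)
  have := (inv_one_add_le_RPDP hβ ⟨v, hv⟩ hy).trans (hxy.trans (RPDP_le hβ hv))
  linarith [(inv_le_inv₀ (by linarith) (by linarith)).1 this]

lemma outlP_zero_le (hβ : 0 < β) (hv : v ∈ dirSetP m β) {q : ℝ} (hmed : |medP m v| ≤ q) :
    outlP m v 0 ≤ q / β := by
  rw [outlP, inner_zero_left, zero_sub, abs_neg]
  exact div_le_div₀ ((abs_nonneg _).trans hmed) hmed hβ hv.2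

end Depth

lemma abs_inner_le_of_RPDP_zero_le [OpensMeasurableSpace H] {m : Measure H}
    [IsProbabilityMeasure m] {β q : ℝ} {v x : H} (hβ : 0 < β)
    (hq : 1/2 < m (closedBall 0 q)) (hx : RPDP m β 0 ≤ RPDP m β x) (hv : v ∈ dirSetP m β) :
    |⟪x, v⟫| ≤ q / β * (2 * q) + q := by
  have hmed : |medP m v| ≤ q := abs_medP_le hv.1.le hq
  have hout : outlP m v x ≤ q / β :=
    outlP_le_of_RPDP_le hβ (fun w hw => outlP_zero_le hβ hw (abs_medP_le hw.1.le hq)) hx hv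
  have hmad : 0 < madP m v := hβ.trans_le hv.2
  have htri := abs_sub_abs_le_abs_sub ⟪x, v⟫ (medP m v)
  calc |⟪x, v⟫| ≤ |⟪x, v⟫ - medP m v| + |medP m v| := by linarith
    _ ≤ q / β * madP m v + q := add_le_add ((div_le_iff₀ hmad).1 hout) hmed
    _ ≤ q / β * (2 * q) + q := by
      have hq0 : 0 ≤ q := (abs_nonneg _).trans hmed
      gcongr
      exact madP_le hv.1.le hq

theorem rpd_median_breakdown_general
    {H : Type*} [NormedAddCommGroup H] [InnerProductSpace ℝ H]
    [MeasurableSpace H] [BorelSpace H]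
    (P : Measure H) [IsProbabilityMeasure P]
    (β : ℝ) (hβ : 0 < β)
    (θ : Measure H → H)
    (hθ : ∀ P' : Measure H, IsProbabilityMeasure P' → (dirSetP P' β).Nonempty →
      θ P' ∈ closure (Submodule.span ℝ (dirSetP P' β) : Set H) ∧
        ∀ y ∈ closure (Submodule.span ℝ (dirSetP P' β) : Set H),
          RPDP P' β y ≤ RPDP P' β (θ P')) :
    (∀ ε : ℝ, 0 ≤ ε → ε < 1/2 → ∃ B : ℝ,
      ∀ Q : Measure H, IsProbabilityMeasure Q → (dirSetP (mix P Q ε) β).Nonempty →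
        ∀ v ∈ dirSetP (mix P Q ε) β, |⟪θ (mix P Q ε) - θ P, v⟫| ≤ B) ∧
    (∀ ε : ℝ, ε ∈ Set.Icc (0 : ℝ) 1 →
      (∀ B : ℝ, ∃ Q : Measure H, IsProbabilityMeasure Q ∧
        (dirSetP (mix P Q ε) β).Nonempty ∧
        ∃ v ∈ dirSetP (mix P Q ε) β, B < |⟪θ (mix P Q ε) - θ P, v⟫|) →
      1/2 ≤ ε) := by
  have bounded : ∀ ε : ℝ, 0 ≤ ε → ε < 1/2 → ∃ B : ℝ,
      ∀ Q : Measure H, IsProbabilityMeasure Q → (dirSetP (mix P Q ε) β).Nonempty →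
        ∀ v ∈ dirSetP (mix P Q ε) β, |⟪θ (mix P Q ε) - θ P, v⟫| ≤ B := by
    intro ε hε0 hε
    obtain ⟨q, hq⟩ := exists_forall_half_lt_mix_closedBall P (0 : H) hε
    refine ⟨q / β * (2 * q) + q + ‖θ P‖, fun Q hQ hne v hv => ?_⟩
    have := isProbabilityMeasure_mix P Q hε0 (by linarith)
    have hmax := (hθ _ this hne).2 0 (subset_closure (Submodule.zero_mem _))
    have hθP : |⟪θ P, v⟫| ≤ ‖θ P‖ := by
      simpa [hv.1] using abs_real_inner_le_norm (θ P) v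
    rw [inner_sub_left]
    linarith [abs_sub (⟪θ (mix P Q ε), v⟫) ⟪θ P, v⟫,
      abs_inner_le_of_RPDP_zero_le hβ (hq Q) hmax hv]
  refine ⟨bounded, fun ε hε hbreak => not_lt.1 fun hlt => ?_⟩
  obtain ⟨B, hB⟩ := bounded ε hε.1 hlt
  obtain ⟨Q, hQ, hne, v, hv, hgt⟩ := hbreak B
  exact (hB Q hQ hne v hv).not_gt hgt

/-- Directional breakdown point of the RPD median: under ε-contamination with ε < 1/2, the
RPD median does not break down in the directional sense (the supremum over contaminating Q
and directions v ∈ V_β(Q,ε) of |⟨θ(P_{(Q,ε)}) - θ(P_X), v⟩| is finite), and consequently the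
directional breakdown point ε*(θ;P_X) is at least 1/2. -/
theorem rpd_median_breakdown
    {H : Type*} [NormedAddCommGroup H] [InnerProductSpace ℝ H]
    [MeasurableSpace H] [BorelSpace H] [SecondCountableTopology H] [CompleteSpace H]
    (P : Measure H) [IsProbabilityMeasure P]
    (β : ℝ) (hβ : 0 < β) (hne : (dirSetP P β).Nonempty)
    (θ : Measure H → H)
    (hθ : ∀ P' : Measure H, IsProbabilityMeasure P' → (dirSetP P' β).Nonempty →
      θ P' ∈ closure (Submodule.span ℝ (dirSetP P' β) : Set H) ∧
        ∀ y ∈ closure (Submodule.span ℝ (dirSetP P' β) : Set H),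
          RPDP P' β y ≤ RPDP P' β (θ P')) :
    (∀ ε : ℝ, 0 ≤ ε → ε < 1/2 → ∃ B : ℝ,
      ∀ Q : Measure H, IsProbabilityMeasure Q → (dirSetP (mix P Q ε) β).Nonempty →
        ∀ v ∈ dirSetP (mix P Q ε) β, |⟪θ (mix P Q ε) - θ P, v⟫| ≤ B) ∧
    (∀ ε : ℝ, ε ∈ Set.Icc (0 : ℝ) 1 →
      (∀ B : ℝ, ∃ Q : Measure H, IsProbabilityMeasure Q ∧
        (dirSetP (mix P Q ε) β).Nonempty ∧
        ∃ v ∈ dirSetP (mix P Q ε) β, B < |⟪θ (mix P Q ε) - θ P, v⟫|) →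
      1/2 ≤ ε) :=
  rpd_median_breakdown_general P β hβ θ hθ

end
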